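/- arXiv:1512.04432 — 2 statements merged into one kernel-verified Lean document; each statement's English description precedes it below -/
import Mathlib

section
/- For every n ≥ 0 and a > 0, ∫₀^∞ e^{-u} ∫₀^{u/a} e_{2n}(v)² dv du = Σ_{i,j=0}^{2n} C(2n+1, 2n−i) C(2n+1, 2n−j) ((−1)^{i+j} / a^{i+j+1}) C(i+j, i). -/
/-!
Expanding `e_{2n}(v)²` into monomials, it suffices to treat `v^k`: the inner integral is
`(u/a)^(k+1)/(k+1)`, and integrating against `e^{-u}` turns `u^(k+1)` into `(k+1)!`, so `v^k`
contributes `k!/a^(k+1)`. For `k = i + j`, `k! = C(i+j, i) i! j!` cancels the factorials of the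
two Laguerre coefficients.
-/

open Set MeasureTheory Real intervalIntegral

/-- The Laguerre polynomials `e_ν(t) = Σ_{m=0}^{ν} C(ν+1, ν−m) (−t)^m / m!`. -/
noncomputable def lagE (ν : ℕ) (t : ℝ) : ℝ :=
  ∑ m ∈ Finset.range (ν+1), (Nat.choose (ν+1) (ν-m) : ℝ) * (-t)^m / m.factorial

open Finset Nat

lemma integrableOn_exp_neg_mul_pow (k : ℕ) :
    IntegrableOn (fun u : ℝ => exp (-u) * u ^ k) (Ioi 0) := by
  refine (GammaIntegral_convergent (s := k + 1) (by positivity)).congr_fun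
    (fun u _ => ?_) measurableSet_Ioi
  simp

lemma integral_exp_neg_mul_pow (k : ℕ) :
    ∫ u in Ioi (0:ℝ), exp (-u) * u ^ k = k ! := by
  rw [← Gamma_nat_eq_factorial, Gamma_eq_integral (by positivity)]
  refine setIntegral_congr_fun measurableSet_Ioi fun u _ => ?_
  simp

lemma exp_neg_mul_integral_pow (k : ℕ) (a u : ℝ) :
    exp (-u) * ∫ v in (0:ℝ)..(u / a), v ^ k
      = exp (-u) * u ^ (k + 1) / (k + 1) / a ^ (k + 1) := by
  rw [integral_pow, div_pow, zero_pow (succ_ne_zero k), sub_zero]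
  ring

lemma integrableOn_exp_neg_mul_integral_pow (k : ℕ) (a : ℝ) :
    IntegrableOn (fun u : ℝ => exp (-u) * ∫ v in (0:ℝ)..(u / a), v ^ k) (Ioi 0) := by
  simp_rw [exp_neg_mul_integral_pow]
  exact ((integrableOn_exp_neg_mul_pow _).div_const _).div_const _

lemma integral_exp_neg_mul_integral_pow (k : ℕ) (a : ℝ) :
    ∫ u in Ioi (0:ℝ), exp (-u) * ∫ v in (0:ℝ)..(u / a), v ^ k = k ! / a ^ (k + 1) := by
  simp_rw [exp_neg_mul_integral_pow]
  rw [MeasureTheory.integral_div, MeasureTheory.integral_div, integral_exp_neg_mul_pow,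
    factorial_succ, cast_mul, cast_succ, mul_div_cancel_left₀ _ (by positivity)]

lemma integral_exp_neg_mul_integral_sum_pow {ι : Type*} (s : Finset ι) (d : ι → ℝ) (e : ι → ℕ)
    (a : ℝ) :
    ∫ u in Ioi (0:ℝ), exp (-u) * ∫ v in (0:ℝ)..(u / a), ∑ i ∈ s, d i * v ^ e i
      = ∑ i ∈ s, d i * ((e i) ! / a ^ (e i + 1)) := by
  have hlin : ∀ u : ℝ, exp (-u) * ∫ v in (0:ℝ)..(u / a), ∑ i ∈ s, d i * v ^ e i
      = ∑ i ∈ s, d i * (exp (-u) * ∫ v in (0:ℝ)..(u / a), v ^ e i) := by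
    intro u
    rw [intervalIntegral.integral_finsetSum
      fun i _ => (by fun_prop : Continuous _).intervalIntegrable _ _, mul_sum]
    refine sum_congr rfl fun i _ => ?_
    rw [intervalIntegral.integral_const_mul]
    ring
  simp_rw [hlin]
  rw [integral_finsetSum _ fun i _ => (integrableOn_exp_neg_mul_integral_pow _ a).const_mul _]
  simp_rw [MeasureTheory.integral_const_mul, integral_exp_neg_mul_integral_pow]

noncomputable def lagCoeff (ν m : ℕ) : ℝ := (ν + 1).choose (ν - m) * (-1) ^ m / m !

lemma lagE_eq_sum (ν : ℕ) (t : ℝ) :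
    lagE ν t = ∑ m ∈ range (ν + 1), lagCoeff ν m * t ^ m := by
  refine sum_congr rfl fun m _ => ?_
  rw [lagCoeff, neg_pow]
  ring

lemma lagE_sq (ν : ℕ) (t : ℝ) :
    lagE ν t ^ 2 = ∑ p ∈ range (ν + 1) ×ˢ range (ν + 1),
      lagCoeff ν p.1 * lagCoeff ν p.2 * t ^ (p.1 + p.2) := by
  rw [sq, lagE_eq_sum, sum_mul_sum, sum_product]
  refine sum_congr rfl fun i _ => sum_congr rfl fun j _ => ?_
  ring

lemma lagCoeff_mul_lagCoeff_mul_factorial (ν i j : ℕ) :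
    lagCoeff ν i * lagCoeff ν j * (i + j) !
      = (ν + 1).choose (ν - i) * (ν + 1).choose (ν - j) * (-1) ^ (i + j) * (i + j).choose i := by
  rw [← add_choose_mul_factorial_mul_factorial i j, ← choose_symm_add, lagCoeff, lagCoeff]
  push_cast
  field_simp
  ring

theorem laguerre_double_integral_general (n : ℕ) (a : ℝ) :
    ∫ u in Ioi (0:ℝ), Real.exp (-u) * ∫ v in (0:ℝ)..(u/a), (lagE (2*n) v)^2
      = ∑ i ∈ Finset.range (2*n+1), ∑ j ∈ Finset.range (2*n+1),
          (Nat.choose (2*n+1) (2*n-i) : ℝ) * (Nat.choose (2*n+1) (2*n-j) : ℝ) *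
            ((-1)^(i+j) / a^(i+j+1)) * (Nat.choose (i+j) i : ℝ) := by
  simp_rw [lagE_sq, integral_exp_neg_mul_integral_sum_pow, sum_product]
  refine sum_congr rfl fun i _ => sum_congr rfl fun j _ => ?_
  rw [← mul_div_assoc, lagCoeff_mul_lagCoeff_mul_factorial]
  ring

/-- Explicit evaluation of `∫₀^∞ e^{−u} ∫₀^{u/a} e_{2n}(v)² dv du` as a double sum. -/
theorem laguerre_double_integral (n : ℕ) (a : ℝ) (ha : 0 < a) :
    ∫ u in Ioi (0:ℝ), Real.exp (-u) * ∫ v in (0:ℝ)..(u/a), (lagE (2*n) v)^2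
      = ∑ i ∈ Finset.range (2*n+1), ∑ j ∈ Finset.range (2*n+1),
          (Nat.choose (2*n+1) (2*n-i) : ℝ) * (Nat.choose (2*n+1) (2*n-j) : ℝ) *
            ((-1)^(i+j) / a^(i+j+1)) * (Nat.choose (i+j) i : ℝ) :=
  laguerre_double_integral_general n a
end

section
/- For every φ ∈ L²(ℝ⁺, m), n ≥ 0 and a > 0, the function t ↦ (1/t) ∫₀^t s e^{-s} φ(s) e_{2n}((t−s)/a) ds belongs to L²(m), with ‖·‖²_{L²(m)} ≤ ‖φ‖²_{L²(m)} · a · ∫₀^∞ e^{-u} ∫₀^{u/a} e_{2n}(v)² dv du, where dm(t) = t e^{-t} dt. -/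
open Set MeasureTheory Real intervalIntegral

/-- The measure `dm(t) = t e^{-t} dt` on `(0,∞)`. -/
noncomputable def mMeasure : Measure ℝ :=
  (volume.restrict (Ioi (0:ℝ))).withDensity (fun t => ENNReal.ofReal (t * Real.exp (-t)))

/-!
For `t > 0` write the inner integral as `∫₀ᵗ (φ √w) (e((t-s)/a) √w) ds` with
`w(s) = s e^{-s}`. Cauchy–Schwarz bounds its square by `‖φ‖²_{L²(m)} · ∫₀ᵗ e((t-s)/a)² w(s) ds`,
and since `w(s) ≤ t` on `(0, t]`, the substitution `v = (t - s)/a` bounds the second factor by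
`t a ∫₀^{t/a} e(v)² dv`. Multiplying by `t⁻² · t e^{-t}` gives a pointwise bound by
`‖φ‖² a e^{-t} ∫₀^{t/a} e²`, which is integrable because `e` has polynomial growth; integrating
it over `t` gives the estimate.
-/

theorem sq_integral_mul_le {α : Type*} [MeasurableSpace α] {μ : Measure α} {f g : α → ℝ}
    (hf : MemLp f 2 μ) (hg : MemLp g 2 μ) :
    (∫ x, f x * g x ∂μ) ^ 2 ≤ (∫ x, f x ^ 2 ∂μ) * ∫ x, g x ^ 2 ∂μ := by
  have hinner : ∀ {u v : α → ℝ} (hu : MemLp u 2 μ) (hv : MemLp v 2 μ),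
      inner ℝ (hu.toLp u) (hv.toLp v) = ∫ x, u x * v x ∂μ := by
    intro u v hu hv
    rw [L2.inner_def]
    refine integral_congr_ae ?_
    filter_upwards [hu.coeFn_toLp, hv.coeFn_toLp] with x hux hvx
    rw [hux, hvx, real_inner_eq_re_inner, RCLike.inner_apply]
    simp [mul_comm]
  simp only [sq]
  rw [← hinner hf hg, ← hinner hf hf, ← hinner hg hg]
  exact real_inner_mul_inner_self_le _ _

theorem sq_integral_mul_mul_le {α : Type*} [MeasurableSpace α] {μ : Measure α}
    {f g w : α → ℝ} (hf : AEStronglyMeasurable f μ) (hg : AEStronglyMeasurable g μ)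
    (hw : AEStronglyMeasurable w μ) (hw0 : 0 ≤ᵐ[μ] w)
    (hfw : Integrable (fun x => f x ^ 2 * w x) μ)
    (hgw : Integrable (fun x => g x ^ 2 * w x) μ) :
    (∫ x, f x * g x * w x ∂μ) ^ 2 ≤ (∫ x, f x ^ 2 * w x ∂μ) * ∫ x, g x ^ 2 * w x ∂μ := by
  have hsqrt : ∀ {u : α → ℝ}, AEStronglyMeasurable u μ →
      Integrable (fun x => u x ^ 2 * w x) μ → MemLp (fun x => u x * √(w x)) 2 μ ∧
        ∫ x, (u x * √(w x)) ^ 2 ∂μ = ∫ x, u x ^ 2 * w x ∂μ := by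
    intro u hu huw
    have heq : (fun x => (u x * √(w x)) ^ 2) =ᵐ[μ] fun x => u x ^ 2 * w x := by
      filter_upwards [hw0] with x hx
      rw [mul_pow, sq_sqrt hx]
    have hm : AEStronglyMeasurable (fun x => u x * √(w x)) μ :=
      hu.mul (continuous_sqrt.comp_aestronglyMeasurable hw)
    exact ⟨(memLp_two_iff_integrable_sq hm).2 (huw.congr heq.symm), integral_congr_ae heq⟩
  obtain ⟨hfL, hfI⟩ := hsqrt hf hfw
  obtain ⟨hgL, hgI⟩ := hsqrt hg hgw
  have hprod : ∫ x, f x * g x * w x ∂μ = ∫ x, (f x * √(w x)) * (g x * √(w x)) ∂μ := by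
    refine integral_congr_ae ?_
    filter_upwards [hw0] with x hx
    rw [mul_mul_mul_comm, mul_self_sqrt hx]
  rw [hprod, ← hfI, ← hgI]
  exact sq_integral_mul_le hfL hgL

lemma mMeasure_absolutelyContinuous : mMeasure ≪ volume.restrict (Ioi 0) :=
  withDensity_absolutelyContinuous _ _

lemma restrict_Ioi_absolutelyContinuous_mMeasure : volume.restrict (Ioi 0) ≪ mMeasure := by
  refine withDensity_absolutelyContinuous' (by fun_prop) ?_
  filter_upwards [ae_restrict_mem measurableSet_Ioi] with t (ht : 0 < t)
  positivity

lemma memLp_two_mMeasure_iff {f : ℝ → ℝ} :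
    MemLp f 2 mMeasure ↔ AEStronglyMeasurable f (volume.restrict (Ioi 0)) ∧
      IntegrableOn (fun t => f t ^ 2 * (t * exp (-t))) (Ioi 0) := by
  have hdens : ∀ᵐ t ∂volume.restrict (Ioi (0:ℝ)),
      f t ^ 2 * (ENNReal.ofReal (t * exp (-t))).toReal = f t ^ 2 * (t * exp (-t)) := by
    filter_upwards [ae_restrict_mem measurableSet_Ioi] with t (ht : 0 < t)
    rw [ENNReal.toReal_ofReal (by positivity)]
  have hint : ∀ hm : AEStronglyMeasurable f mMeasure, MemLp f 2 mMeasure ↔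
      IntegrableOn (fun t => f t ^ 2 * (t * exp (-t))) (Ioi 0) := fun hm => by
    rw [memLp_two_iff_integrable_sq hm, mMeasure,
      integrable_withDensity_iff (by fun_prop) (.of_forall fun _ => ENNReal.ofReal_lt_top)]
    exact integrable_congr hdens
  exact ⟨fun hf => ⟨hf.1.mono_ac restrict_Ioi_absolutelyContinuous_mMeasure, (hint hf.1).1 hf⟩,
    fun ⟨hm, hf⟩ => (hint (hm.mono_ac mMeasure_absolutelyContinuous)).2 hf⟩

noncomputable def convolutionOp (k : ℝ → ℝ) (a : ℝ) (φ : ℝ → ℝ) (t : ℝ) : ℝ :=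
  (1 / t) * ∫ s in (0:ℝ)..t, s * exp (-s) * φ s * k ((t - s) / a)

section Kernel

variable {k : ℝ → ℝ} {a : ℝ} {φ : ℝ → ℝ}

lemma integral_Ioc_kernel_sq_mul_weight_le (hk : Continuous k) (ha : 0 < a) {t : ℝ}
    (ht : 0 ≤ t) :
    ∫ s in Ioc 0 t, k ((t - s) / a) ^ 2 * (s * exp (-s)) ≤
      t * (a * ∫ v in (0:ℝ)..t / a, k v ^ 2) := by
  have hweight : ∀ s ∈ Icc 0 t, s * exp (-s) ≤ t := fun s hs =>
    (mul_le_of_le_one_right hs.1 (exp_le_one_iff.2 (by linarith [hs.1]))).trans hs.2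
  rw [← intervalIntegral.integral_of_le ht]
  calc ∫ s in (0:ℝ)..t, k ((t - s) / a) ^ 2 * (s * exp (-s))
      ≤ ∫ s in (0:ℝ)..t, t * k ((t - s) / a) ^ 2 :=
        integral_mono_on ht ((by fun_prop : Continuous _).intervalIntegrable _ _)
          ((by fun_prop : Continuous _).intervalIntegrable _ _) fun s hs => by
          rw [mul_comm t]
          exact mul_le_mul_of_nonneg_left (hweight s hs) (sq_nonneg _)
    _ = t * ∫ s in (0:ℝ)..t, k (s / a) ^ 2 := by
        rw [intervalIntegral.integral_const_mul,
          intervalIntegral.integral_comp_sub_left (fun s => k (s / a) ^ 2)]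
        simp
    _ = t * (a * ∫ v in (0:ℝ)..t / a, k v ^ 2) := by
        rw [intervalIntegral.integral_comp_div (fun v => k v ^ 2) ha.ne', zero_div, smul_eq_mul]

lemma sq_intervalIntegral_weight_mul_kernel_le (hk : Continuous k)
    (hφm : AEStronglyMeasurable φ (volume.restrict (Ioi 0)))
    (hφ : IntegrableOn (fun s => φ s ^ 2 * (s * exp (-s))) (Ioi 0)) {t : ℝ} (ht : 0 ≤ t) :
    (∫ s in (0:ℝ)..t, s * exp (-s) * φ s * k ((t - s) / a)) ^ 2 ≤
      (∫ s in Ioi 0, φ s ^ 2 * (s * exp (-s))) *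
        ∫ s in Ioc 0 t, k ((t - s) / a) ^ 2 * (s * exp (-s)) := by
  have hsub : Ioc 0 t ⊆ Ioi (0:ℝ) := Ioc_subset_Ioi_self
  have hw0 : 0 ≤ᵐ[volume.restrict (Ioc 0 t)] fun s : ℝ => s * exp (-s) := by
    filter_upwards [ae_restrict_mem measurableSet_Ioc] with s hs
    exact mul_nonneg hs.1.le (exp_pos _).le
  have hφ_le : ∫ s in Ioc 0 t, φ s ^ 2 * (s * exp (-s)) ≤
      ∫ s in Ioi 0, φ s ^ 2 * (s * exp (-s)) :=
    setIntegral_mono_set hφ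
      (by filter_upwards [ae_restrict_mem measurableSet_Ioi] with s (hs : 0 < s); positivity)
      hsub.eventuallyLE
  rw [intervalIntegral.integral_of_le ht]
  calc (∫ s in Ioc 0 t, s * exp (-s) * φ s * k ((t - s) / a)) ^ 2
      = (∫ s in Ioc 0 t, φ s * k ((t - s) / a) * (s * exp (-s))) ^ 2 := by
        congr 1; exact integral_congr_ae (.of_forall fun s => by ring)
    _ ≤ (∫ s in Ioc 0 t, φ s ^ 2 * (s * exp (-s))) *
          ∫ s in Ioc 0 t, k ((t - s) / a) ^ 2 * (s * exp (-s)) :=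
        sq_integral_mul_mul_le (hφm.mono_set hsub) (by fun_prop) (by fun_prop) hw0
          (hφ.mono_set hsub) (Continuous.integrableOn_Ioc (by fun_prop))
    _ ≤ _ := mul_le_mul_of_nonneg_right hφ_le
          (integral_nonneg_of_ae <| by
            filter_upwards [hw0] with s hs
            exact mul_nonneg (sq_nonneg _) hs)

lemma convolutionOp_sq_mul_weight_le (hk : Continuous k) (ha : 0 < a)
    (hφm : AEStronglyMeasurable φ (volume.restrict (Ioi 0)))
    (hφ : IntegrableOn (fun s => φ s ^ 2 * (s * exp (-s))) (Ioi 0)) {t : ℝ} (ht : 0 < t) :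
    convolutionOp k a φ t ^ 2 * (t * exp (-t)) ≤
      (∫ s in Ioi 0, φ s ^ 2 * (s * exp (-s))) * a *
        (exp (-t) * ∫ v in (0:ℝ)..t / a, k v ^ 2) := by
  set N := ∫ s in Ioi 0, φ s ^ 2 * (s * exp (-s))
  set J := ∫ v in (0:ℝ)..t / a, k v ^ 2
  have hN : 0 ≤ N := setIntegral_nonneg measurableSet_Ioi fun s (hs : 0 < s) => by positivity
  have hF : (∫ s in (0:ℝ)..t, s * exp (-s) * φ s * k ((t - s) / a)) ^ 2 ≤ N * (t * (a * J)) :=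
    (sq_intervalIntegral_weight_mul_kernel_le hk hφm hφ ht.le).trans
      (mul_le_mul_of_nonneg_left (integral_Ioc_kernel_sq_mul_weight_le hk ha ht.le) hN)
  calc convolutionOp k a φ t ^ 2 * (t * exp (-t))
      = (∫ s in (0:ℝ)..t, s * exp (-s) * φ s * k ((t - s) / a)) ^ 2 * (exp (-t) / t) := by
        rw [convolutionOp]; field_simp
    _ ≤ N * (t * (a * J)) * (exp (-t) / t) := by gcongr
    _ = N * a * (exp (-t) * J) := by field_simp

lemma aestronglyMeasurable_convolutionOp (hk : Continuous k)
    (hφm : AEStronglyMeasurable φ (volume.restrict (Ioi 0))) :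
    AEStronglyMeasurable (convolutionOp k a φ) (volume.restrict (Ioi 0)) := by
  set g : ℝ × ℝ → ℝ := fun p => p.2 * exp (-p.2) * φ p.2 * k ((p.1 - p.2) / a)
  have hg : AEStronglyMeasurable g ((volume.restrict (Ioi 0)).prod (volume.restrict (Ioi 0))) :=
    ((by fun_prop : Continuous fun p : ℝ × ℝ => p.2 * exp (-p.2)).aestronglyMeasurable.mul
      hφm.comp_snd).mul
        (by fun_prop : Continuous fun p : ℝ × ℝ => k ((p.1 - p.2) / a)).aestronglyMeasurable
  replace hg := hg.indicator (measurableSet_le measurable_snd measurable_fst)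
  have hint : AEStronglyMeasurable
      (fun t => ∫ s in Ioi 0, {p : ℝ × ℝ | p.2 ≤ p.1}.indicator g (t, s))
      (volume.restrict (Ioi 0)) := hg.integral_prod_right'
  refine (measurable_inv.aestronglyMeasurable.mul hint).congr ?_
  filter_upwards [ae_restrict_mem measurableSet_Ioi] with t (ht : 0 < t)
  have hind : ∀ s, {p : ℝ × ℝ | p.2 ≤ p.1}.indicator g (t, s) =
      (Iic t).indicator (fun s => g (t, s)) s := fun s => by
    by_cases hs : s ≤ t <;> simp [indicator, hs]
  rw [Pi.mul_apply, convolutionOp, one_div, intervalIntegral.integral_of_le ht.le]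
  simp only [hind, setIntegral_indicator measurableSet_Iic, Ioi_inter_Iic, g]

end Kernel

theorem memLp_convolutionOp_and_integral_le {k : ℝ → ℝ} {a : ℝ} {φ : ℝ → ℝ}
    (hk : Continuous k) (ha : 0 < a) (hφ : MemLp φ 2 mMeasure)
    (hG : IntegrableOn (fun u => exp (-u) * ∫ v in (0:ℝ)..u / a, k v ^ 2) (Ioi 0)) :
    MemLp (convolutionOp k a φ) 2 mMeasure ∧
      ∫ t in Ioi 0, convolutionOp k a φ t ^ 2 * (t * exp (-t)) ≤
        (∫ t in Ioi 0, φ t ^ 2 * (t * exp (-t))) * a *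
          ∫ u in Ioi 0, exp (-u) * ∫ v in (0:ℝ)..u / a, k v ^ 2 := by
  obtain ⟨hφm, hφ2⟩ := memLp_two_mMeasure_iff.1 hφ
  set N := ∫ t in Ioi 0, φ t ^ 2 * (t * exp (-t))
  have hTm := aestronglyMeasurable_convolutionOp (a := a) hk hφm
  have hNG := hG.const_mul (N * a)
  have hbound := fun t (ht : 0 < t) => convolutionOp_sq_mul_weight_le hk ha hφm hφ2 ht
  have hT : IntegrableOn (fun t => convolutionOp k a φ t ^ 2 * (t * exp (-t))) (Ioi 0) := by
    refine hNG.mono' ((hTm.pow 2).mul (by fun_prop : Continuous _).aestronglyMeasurable) ?_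
    filter_upwards [ae_restrict_mem measurableSet_Ioi] with t (ht : 0 < t)
    rw [norm_of_nonneg (by positivity)]
    exact hbound t ht
  refine ⟨memLp_two_mMeasure_iff.2 ⟨hTm, hT⟩, ?_⟩
  rw [← MeasureTheory.integral_const_mul]
  exact setIntegral_mono_on hT hNG measurableSet_Ioi hbound

lemma continuous_lagE (ν : ℕ) : Continuous (lagE ν) := by
  unfold lagE; fun_prop

lemma abs_lagE_le (ν : ℕ) : ∃ C ≥ 0, ∀ v : ℝ, 0 ≤ v → |lagE ν v| ≤ C * (1 + v) ^ ν := by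
  refine ⟨∑ m ∈ Finset.range (ν + 1), ((ν + 1).choose (ν - m) : ℝ) / m.factorial,
    by positivity, fun v hv => ?_⟩
  rw [Finset.sum_mul]
  refine (Finset.abs_sum_le_sum_abs _ _).trans (Finset.sum_le_sum fun m hm => ?_)
  have hpow : v ^ m ≤ (1 + v) ^ ν :=
    (pow_le_pow_left₀ hv (by linarith) m).trans
      (pow_le_pow_right₀ (by linarith) (Nat.lt_succ_iff.1 (Finset.mem_range.1 hm)))
  rw [abs_div, abs_mul, abs_pow, abs_neg, abs_of_nonneg hv, Nat.abs_cast, Nat.abs_cast,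
    mul_div_right_comm]
  gcongr

lemma integral_lagE_sq_le (ν : ℕ) :
    ∃ C, ∀ x : ℝ, 0 ≤ x → ∫ v in (0:ℝ)..x, lagE ν v ^ 2 ≤ C * (1 + x) ^ (2 * ν + 1) := by
  obtain ⟨C, hC0, hC⟩ := abs_lagE_le ν
  refine ⟨C ^ 2, fun x hx => ?_⟩
  have hsq : ∀ v ∈ uIoc 0 x, ‖lagE ν v ^ 2‖ ≤ C ^ 2 * (1 + x) ^ (2 * ν) := fun v hv => by
    rw [uIoc_of_le hx] at hv
    calc ‖lagE ν v ^ 2‖ = |lagE ν v| ^ 2 := by rw [norm_pow, norm_eq_abs]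
      _ ≤ (C * (1 + x) ^ ν) ^ 2 :=
        pow_le_pow_left₀ (abs_nonneg _) ((hC v hv.1.le).trans
          (by gcongr; exacts [by linarith [hv.1], hv.2])) 2
      _ = C ^ 2 * (1 + x) ^ (2 * ν) := by ring
  calc ∫ v in (0:ℝ)..x, lagE ν v ^ 2
      ≤ C ^ 2 * (1 + x) ^ (2 * ν) * |x - 0| :=
        (le_abs_self _).trans (intervalIntegral.norm_integral_le_of_norm_le_const hsq)
    _ ≤ C ^ 2 * (1 + x) ^ (2 * ν + 1) := by
        rw [sub_zero, abs_of_nonneg hx, pow_succ (1 + x), ← mul_assoc]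
        gcongr
        linarith

lemma integrableOn_exp_neg_mul_one_add_div_pow (a : ℝ) (k : ℕ) :
    IntegrableOn (fun t => exp (-t) * (1 + t / a) ^ k) (Ioi 0) := by
  have hgamma : ∀ j : ℕ, IntegrableOn (fun t => exp (-t) * t ^ j) (Ioi 0) := fun j => by
    simpa using Real.GammaIntegral_convergent (s := j + 1) (by positivity)
  have hexpand : (fun t => exp (-t) * (1 + t / a) ^ k) =
      fun t => ∑ j ∈ Finset.range (k + 1), (k.choose j / a ^ j) * (exp (-t) * t ^ j) := by
    funext t
    rw [add_comm, add_pow, Finset.mul_sum]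
    exact Finset.sum_congr rfl fun j _ => by ring
  rw [hexpand]
  exact integrable_finsetSum _ fun j _ => (hgamma j).const_mul _

lemma integrableOn_exp_neg_mul_integral_lagE_sq (ν : ℕ) {a : ℝ} (ha : 0 < a) :
    IntegrableOn (fun u => exp (-u) * ∫ v in (0:ℝ)..u / a, lagE ν v ^ 2) (Ioi 0) := by
  obtain ⟨C, hC⟩ := integral_lagE_sq_le ν
  have hJ : Continuous fun x => ∫ v in (0:ℝ)..x, lagE ν v ^ 2 :=
    intervalIntegral.continuous_primitive
      (fun _ _ => ((continuous_lagE ν).pow 2).intervalIntegrable _ _) 0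
  refine ((integrableOn_exp_neg_mul_one_add_div_pow a (2 * ν + 1)).const_mul C).mono'
    (by fun_prop : Continuous _).aestronglyMeasurable ?_
  filter_upwards [ae_restrict_mem measurableSet_Ioi] with u (hu : 0 < u)
  have hua : 0 ≤ u / a := by positivity
  rw [norm_of_nonneg (mul_nonneg (exp_pos _).le
    (intervalIntegral.integral_nonneg hua fun _ _ => sq_nonneg _)), mul_left_comm]
  exact mul_le_mul_of_nonneg_left (hC _ hua) (exp_pos _).le

/-- The convolution-type operator `t ↦ (1/t)∫₀^t s e^{−s} φ(s) e_{2n}((t−s)/a) ds` maps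
`L²(m)` to `L²(m)` with the explicit norm bound. -/
theorem convolution_operator_L2_bound (φ : ℝ → ℝ) (hφ : MemLp φ 2 mMeasure)
    (n : ℕ) (a : ℝ) (ha : 0 < a) :
    MemLp (fun t => (1/t) * ∫ s in (0:ℝ)..t, s * Real.exp (-s) * φ s * lagE (2*n) ((t-s)/a))
      2 mMeasure ∧
    (∫ t in Ioi (0:ℝ),
        ((1/t) * ∫ s in (0:ℝ)..t, s * Real.exp (-s) * φ s * lagE (2*n) ((t-s)/a))^2
          * (t * Real.exp (-t)))
      ≤ (∫ t in Ioi (0:ℝ), (φ t)^2 * (t * Real.exp (-t))) * a *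
        ∫ u in Ioi (0:ℝ), Real.exp (-u) * ∫ v in (0:ℝ)..(u/a), (lagE (2*n) v)^2 :=
  memLp_convolutionOp_and_integral_le (continuous_lagE _) ha hφ
    (integrableOn_exp_neg_mul_integral_lagE_sq _ ha)
end
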